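/- arXiv:2504.11040 — 3 statements merged into one kernel-verified Lean document; each statement's English description precedes it below -/
import Mathlib

section
/- Let B be a closed, path-connected subset of [0,1]² disjoint from the diagonal. Define X₀ = {x : ℤ → [0,1] : (x_{2k}, x_{2k+1}) ∈ B for all k ∈ ℤ} and X₁ = {x : ℤ → [0,1] : (x_{2k-1}, x_{2k}) ∈ B for all k ∈ ℤ}. Then X₀ ∩ X₁ = ∅. -/
/-!
Every consecutive pair `(x n, x (n + 1))` lies in `B`. On the compact connected set `B` the
continuous function `(a, b) ↦ b - a` has no zero, so it has constant sign and is bounded away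
from `0` by some `ε > 0`. Hence `x` moves monotonically by at least `ε` at every step, which is
impossible inside `[0,1]`.
-/

open unitInterval

theorem not_bddAbove_range_of_add_le {u : ℕ → ℝ} {ε : ℝ} (hε : 0 < ε)
    (hstep : ∀ n, u n + ε ≤ u (n + 1)) : ¬ BddAbove (Set.range u) := by
  rintro ⟨M, hM⟩
  have hgrowth : ∀ n : ℕ, u 0 + n * ε ≤ u n := by
    intro n
    induction n with
    | zero => simp
    | succ k ih => push_cast; linarith [hstep k]
  obtain ⟨n, hn⟩ := exists_nat_gt ((M - u 0) / ε)
  rw [div_lt_iff₀ hε] at hn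
  linarith [hgrowth n, hM (Set.mem_range_self n)]

theorem IsPreconnected.forall_pos_or_forall_neg {X : Type*} [TopologicalSpace X] {S : Set X}
    (hS : IsPreconnected S) {g : X → ℝ} (hg : ContinuousOn g S) (h0 : ∀ p ∈ S, g p ≠ 0) :
    (∀ p ∈ S, 0 < g p) ∨ (∀ p ∈ S, g p < 0) := by
  by_contra! h
  obtain ⟨⟨q, hq, hq0⟩, ⟨p, hp, hp0⟩⟩ := h
  obtain ⟨r, hr, hr0⟩ := hS.intermediate_value hq hp hg ⟨hq0, hp0⟩
  exact h0 r hr hr0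

theorem IsCompact.exists_pos_le_abs {X : Type*} [TopologicalSpace X] {S : Set X}
    (hS : IsCompact S) {g : X → ℝ} (hg : ContinuousOn g S) (h0 : ∀ p ∈ S, g p ≠ 0) :
    ∃ ε > 0, ∀ p ∈ S, ε ≤ |g p| := by
  rcases S.eq_empty_or_nonempty with rfl | hne
  · exact ⟨1, one_pos, by simp⟩
  obtain ⟨p₀, hp₀, hmin⟩ := hS.exists_isMinOn hne hg.abs
  exact ⟨|g p₀|, abs_pos.mpr (h0 p₀ hp₀), fun p hp => hmin hp⟩

theorem forall_pair_mem_of_even_of_odd {α : Type*} {B : Set (α × α)} {x : ℤ → α}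
    (h0 : ∀ k : ℤ, (x (2 * k), x (2 * k + 1)) ∈ B)
    (h1 : ∀ k : ℤ, (x (2 * k - 1), x (2 * k)) ∈ B) (n : ℤ) : (x n, x (n + 1)) ∈ B := by
  rcases Int.even_or_odd' n with ⟨k, rfl | rfl⟩
  · exact h0 k
  · have h := h1 (k + 1)
    rwa [show 2 * (k + 1) - 1 = 2 * k + 1 by ring, show 2 * (k + 1) = 2 * k + 1 + 1 by ring] at h

/-- For a closed path-connected `B ⊆ [0,1]²` disjoint from the diagonal, the even-aligned
and odd-aligned block-type sets `X₀` and `X₁` are disjoint. -/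
theorem stmt3 (B : Set (I × I)) (hcl : IsClosed B) (hpc : IsPathConnected B)
    (hdiag : ∀ p ∈ B, p.1 ≠ p.2) :
    {x : ℤ → I | ∀ k : ℤ, (x (2 * k), x (2 * k + 1)) ∈ B} ∩
      {x : ℤ → I | ∀ k : ℤ, (x (2 * k - 1), x (2 * k)) ∈ B} = ∅ := by
  rw [Set.eq_empty_iff_forall_notMem]
  rintro x ⟨h0, h1⟩
  have hB := forall_pair_mem_of_even_of_odd h0 h1
  set g : I × I → ℝ := fun p => (p.2 : ℝ) - p.1
  have hg : Continuous g := by fun_prop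
  have hg0 : ∀ p ∈ B, g p ≠ 0 := fun p hp hgp =>
    hdiag p hp (Subtype.ext (sub_eq_zero.mp hgp).symm)
  obtain ⟨ε, hε, hεg⟩ := hcl.isCompact.exists_pos_le_abs hg.continuousOn hg0
  rcases hpc.isConnected.isPreconnected.forall_pos_or_forall_neg hg.continuousOn hg0 with
    hpos | hneg
  · refine not_bddAbove_range_of_add_le hε (u := fun n => (x n : ℝ)) (fun n => ?_)
      ⟨1, by rintro _ ⟨n, rfl⟩; exact (x n).2.2⟩
    have := hεg _ (hB n)
    rw [abs_of_pos (hpos _ (hB n))] at this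
    push_cast; simp only [g] at this; linarith
  · refine not_bddAbove_range_of_add_le hε (u := fun n => -(x n : ℝ)) (fun n => ?_)
      ⟨0, by rintro _ ⟨n, rfl⟩; exact neg_nonpos.mpr (x n).2.1⟩
    have := hεg _ (hB n)
    rw [abs_of_neg (hneg _ (hB n))] at this
    push_cast; simp only [g] at this; linarith
end

section
/- Let B ⊆ [0,1]² be closed, path-connected, and disjoint from the diagonal, and let X = X₀ ∪ X₁ where X₀ = {x ∈ [0,1]^ℤ : (x_{2k},x_{2k+1}) ∈ B ∀k} and X₁ = {x ∈ [0,1]^ℤ : (x_{2k-1},x_{2k}) ∈ B ∀k}. Define φ : X → {0,1} by φ(x) = 0 if x ∈ X₀ and φ(x) = 1 if x ∈ X₁, and T : {0,1} → {0,1} by T(i) = 1 - i. Then φ is well-defined, continuous (with {0,1} discrete), and φ ∘ σ = T ∘ φ, where σ is the shift on [0,1]^ℤ. -/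
open unitInterval

/-- The even-aligned block-type set. -/
def X0 (B : Set (I × I)) : Set (ℤ → I) :=
  {x | ∀ k : ℤ, (x (2 * k), x (2 * k + 1)) ∈ B}

/-- The odd-aligned block-type set. -/
def X1 (B : Set (I × I)) : Set (ℤ → I) :=
  {x | ∀ k : ℤ, (x (2 * k - 1), x (2 * k)) ∈ B}

/-! A point of `X₀ ∩ X₁` would make every pair of consecutive coordinates a point of `B`.
Since `B` is connected and misses the diagonal, `p.2 - p.1` has a constant sign on `B`, and by
compactness it is bounded away from `0` there; so the coordinates would move monotonically by
steps of at least some `ε > 0` and leave `[0,1]`. Hence `X₀` and `X₁` are disjoint closed sets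
covering `X`, each of them clopen in `X`, and the shift swaps them. -/

section BlockSets

variable {B : Set (I × I)}

theorem isClosed_X0 (hB : IsClosed B) : IsClosed (X0 B) := by
  simp only [X0, Set.ofPred_forall]
  exact isClosed_iInter fun k =>
    hB.preimage ((continuous_apply (2 * k)).prodMk (continuous_apply (2 * k + 1)))

theorem isClosed_X1 (hB : IsClosed B) : IsClosed (X1 B) := by
  simp only [X1, Set.ofPred_forall]
  exact isClosed_iInter fun k =>
    hB.preimage ((continuous_apply (2 * k - 1)).prodMk (continuous_apply (2 * k)))

theorem shift_mem_X1_of_mem_X0 {x : ℤ → I} (hx : x ∈ X0 B) :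
    (fun n => x (n + 1)) ∈ X1 B := fun k => by
  simpa using hx k

theorem shift_mem_X0_of_mem_X1 {x : ℤ → I} (hx : x ∈ X1 B) :
    (fun n => x (n + 1)) ∈ X0 B := fun k => by
  convert hx (k + 1) using 3 <;> ring

theorem consecutive_mem_of_mem_X0_of_mem_X1 {x : ℤ → I} (h0 : x ∈ X0 B) (h1 : x ∈ X1 B)
    (n : ℤ) : (x n, x (n + 1)) ∈ B := by
  obtain ⟨k, rfl | rfl⟩ := Int.even_or_odd' n
  · exact h0 k
  · convert h1 (k + 1) using 3 <;> ring

end BlockSets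

theorem IsPreconnected.forall_lt_or_forall_gt {α : Type*} [LinearOrder α] [TopologicalSpace α]
    [OrderClosedTopology α] {B : Set (α × α)} (hB : IsPreconnected B)
    (hdiag : ∀ p ∈ B, p.1 ≠ p.2) : (∀ p ∈ B, p.1 < p.2) ∨ (∀ p ∈ B, p.2 < p.1) :=
  hB.subset_or_subset (isOpen_lt continuous_fst continuous_snd)
    (isOpen_lt continuous_snd continuous_fst)
    (Set.disjoint_left.2 fun _ h h' => lt_asymm h h')
    (fun p hp => lt_or_gt_of_ne (hdiag p hp))

theorem add_mul_le_of_add_le_succ {x : ℕ → ℝ} {ε : ℝ} (h : ∀ n, x n + ε ≤ x (n + 1)) (n : ℕ) :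
    x 0 + n * ε ≤ x n := by
  induction n with
  | zero => simp
  | succ n ih => push_cast; linarith [h n]

theorem not_forall_consecutive_mem_of_forall_lt {B : Set (I × I)} (hB : IsClosed B)
    (hlt : ∀ p ∈ B, p.1 < p.2) (x : ℕ → I) : ¬ ∀ n, (x n, x (n + 1)) ∈ B := by
  intro hx
  obtain ⟨q, hqB, hq⟩ := hB.isCompact.exists_isMinOn ⟨_, hx 0⟩
    (Continuous.continuousOn (f := fun p : I × I => (p.2 : ℝ) - p.1) (by fun_prop))
  have hε : 0 < (q.2 : ℝ) - q.1 := sub_pos.2 (hlt q hqB)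
  have hstep : ∀ n, (x n : ℝ) + (q.2 - q.1) ≤ x (n + 1) := fun n => by
    linarith [isMinOn_iff.1 hq _ (hx n)]
  obtain ⟨N, hN⟩ := exists_nat_gt (1 / (q.2 - q.1 : ℝ))
  rw [div_lt_iff₀ hε] at hN
  linarith [add_mul_le_of_add_le_succ hstep N, (x 0).2.1, (x N).2.2]

theorem disjoint_X0_X1 {B : Set (I × I)} (hcl : IsClosed B) (hpc : IsPreconnected B)
    (hdiag : ∀ p ∈ B, p.1 ≠ p.2) : Disjoint (X0 B) (X1 B) := by
  refine Set.disjoint_left.2 fun x h0 h1 => ?_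
  have hx := consecutive_mem_of_mem_X0_of_mem_X1 h0 h1
  rcases hpc.forall_lt_or_forall_gt hdiag with hlt | hgt
  · exact not_forall_consecutive_mem_of_forall_lt hcl hlt (fun n => x n) fun n => by
      exact_mod_cast hx n
  · -- Reversing time turns a decreasing chain in `B` into an increasing one in `Prod.swap ⁻¹' B`.
    refine not_forall_consecutive_mem_of_forall_lt (hcl.preimage continuous_swap)
      (fun p hp => hgt _ hp) (fun n => x (-n)) fun n => ?_
    simp only [Set.mem_preimage, Prod.swap_prod_mk]
    convert hx (-n - 1) using 3 <;> push_cast <;> ring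

theorem isClopen_preimage_val_union {X : Type*} [TopologicalSpace X] {s t : Set X}
    (hs : IsClosed s) (ht : IsClosed t) (hst : Disjoint s t) :
    IsClopen (Subtype.val ⁻¹' s : Set ↥(s ∪ t)) := by
  have hcompl : (Subtype.val ⁻¹' s : Set ↥(s ∪ t))ᶜ = Subtype.val ⁻¹' t := by
    ext ⟨x, hx⟩
    exact ⟨hx.resolve_left, fun h => hst.notMem_of_mem_right h⟩
  exact ⟨hs.preimage continuous_subtype_val,
    isClosed_compl_iff.1 (hcompl ▸ ht.preimage continuous_subtype_val)⟩

/-- For closed path-connected `B` disjoint from the diagonal, the map `φ : X₀ ∪ X₁ → {0,1}`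
sending `X₀` to `0` and `X₁` to `1` is well-defined, continuous, and intertwines the shift with
the two-point swap `i ↦ 1 - i`. -/
theorem stmt11 (B : Set (I × I)) (hcl : IsClosed B) (hpc : IsPathConnected B)
    (hdiag : ∀ p ∈ B, p.1 ≠ p.2) :
    ∃ φ : {x : ℤ → I // x ∈ X0 B ∪ X1 B} → Fin 2,
      Continuous φ ∧
      (∀ x : {x : ℤ → I // x ∈ X0 B ∪ X1 B}, x.1 ∈ X0 B → φ x = 0) ∧
      (∀ x : {x : ℤ → I // x ∈ X0 B ∪ X1 B}, x.1 ∈ X1 B → φ x = 1) ∧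
      (∀ (x : {x : ℤ → I // x ∈ X0 B ∪ X1 B})
        (h : (fun n : ℤ => x.1 (n + 1)) ∈ X0 B ∪ X1 B),
        φ ⟨fun n : ℤ => x.1 (n + 1), h⟩ = 1 - φ x) := by
  classical
  have hdisj := disjoint_X0_X1 hcl hpc.isConnected.isPreconnected hdiag
  have hU := isClopen_preimage_val_union (isClosed_X0 hcl) (isClosed_X1 hcl) hdisj
  let φ := LocallyConstant.ofIsClopen hU
  have hφ0 : ∀ x : {x : ℤ → I // x ∈ X0 B ∪ X1 B}, x.1 ∈ X0 B → φ x = 0 := fun _ h => if_pos h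
  have hφ1 : ∀ x : {x : ℤ → I // x ∈ X0 B ∪ X1 B}, x.1 ∈ X1 B → φ x = 1 :=
    fun _ h => if_neg (hdisj.notMem_of_mem_right h)
  refine ⟨φ, φ.continuous, hφ0, hφ1, fun x h => ?_⟩
  rcases x.2 with hx | hx
  · rw [hφ1 _ (shift_mem_X1_of_mem_X0 hx), hφ0 x hx]; rfl
  · rw [hφ0 _ (shift_mem_X0_of_mem_X1 hx), hφ1 x hx]; rfl
end

section
/- Let B = {(s, s + 1/10 mod 1) : s ∈ ℝ/ℤ} ⊆ (ℝ/ℤ)². Then B is closed, path-connected, disjoint from the diagonal {(t,t) : t ∈ ℝ/ℤ}, and the point x : ℤ → ℝ/ℤ defined by x_i = i/10 mod 1 satisfies (x_k, x_{k+1}) ∈ B for all k ∈ ℤ; consequently x lies in both X₀ = {y ∈ (ℝ/ℤ)^ℤ : (y_{2k},y_{2k+1}) ∈ B ∀k} and X₁ = {y ∈ (ℝ/ℤ)^ℤ : (y_{2k-1},y_{2k}) ∈ B ∀k}, so X₀ ∩ X₁ ≠ ∅. -/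
open scoped Real

/-- The graph of rotation by `1/10` on the torus. -/
def torB : Set (AddCircle (1 : ℝ) × AddCircle (1 : ℝ)) :=
  {p | p.2 = p.1 + ((1 / 10 : ℝ) : AddCircle (1 : ℝ))}

theorem setOf_snd_eq_fst_add_eq_range {G : Type*} [Add G] (c : G) :
    {p : G × G | p.2 = p.1 + c} = Set.range fun s : G => (s, s + c) := by
  ext ⟨s, t⟩
  simp [eq_comm]

theorem diag_notMem_setOf_snd_eq_fst_add {G : Type*} [AddGroup G] {c : G} (hc : c ≠ 0) (t : G) :
    (t, t) ∉ {p : G × G | p.2 = p.1 + c} := fun h => hc (left_eq_add.mp h)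

section RotationGraph

variable {G : Type*} [TopologicalSpace G] [Add G] [ContinuousAdd G] (c : G)

theorem isClosed_setOf_snd_eq_fst_add [T2Space G] : IsClosed {p : G × G | p.2 = p.1 + c} :=
  isClosed_eq continuous_snd (continuous_fst.add continuous_const)

theorem isPathConnected_setOf_snd_eq_fst_add [PathConnectedSpace G] :
    IsPathConnected {p : G × G | p.2 = p.1 + c} := by
  rw [setOf_snd_eq_fst_add_eq_range]
  exact isPathConnected_range (continuous_id.prodMk (continuous_id.add continuous_const))

end RotationGraph

theorem mem_inter_of_forall_succ {α : Type*} {S : Set (α × α)} {y : ℤ → α}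
    (hy : ∀ k, (y k, y (k + 1)) ∈ S) :
    y ∈ {y : ℤ → α | ∀ k : ℤ, (y (2 * k), y (2 * k + 1)) ∈ S} ∩
      {y : ℤ → α | ∀ k : ℤ, (y (2 * k - 1), y (2 * k)) ∈ S} :=
  ⟨fun k => hy (2 * k), fun k => by simpa using hy (2 * k - 1)⟩

theorem coe_one_div_ten_ne_zero : ((1 / 10 : ℝ) : AddCircle (1 : ℝ)) ≠ 0 := by
  rw [Ne, AddCircle.coe_eq_zero_iff_of_mem_Ico (by norm_num)]
  norm_num

theorem torB_mem_orbit (k : ℤ) :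
    (((k / 10 : ℝ) : AddCircle (1 : ℝ)), (((k + 1) / 10 : ℝ) : AddCircle (1 : ℝ))) ∈ torB := by
  change (((k + 1) / 10 : ℝ) : AddCircle (1 : ℝ)) = ((k / 10 : ℝ) : AddCircle (1 : ℝ)) + _
  rw [← AddCircle.coe_add, add_div]

/-- On the torus `ℝ/ℤ`, the graph `B` of rotation by `1/10` is closed, path-connected,
disjoint from the diagonal, yet the orbit point `x_i = i/10 mod 1` has all consecutive
pairs in `B`, hence lies in both `X₀` and `X₁`, so `X₀ ∩ X₁ ≠ ∅`. -/
theorem stmt18 :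
    IsClosed torB ∧ IsPathConnected torB ∧
    (∀ t : AddCircle (1 : ℝ), (t, t) ∉ torB) ∧
    (∀ k : ℤ, (((k / 10 : ℝ) : AddCircle (1 : ℝ)), (((k + 1) / 10 : ℝ) : AddCircle (1 : ℝ)))
      ∈ torB) ∧
    (fun i : ℤ => ((i / 10 : ℝ) : AddCircle (1 : ℝ))) ∈
      {y : ℤ → AddCircle (1 : ℝ) | ∀ k : ℤ, (y (2 * k), y (2 * k + 1)) ∈ torB} ∩
        {y : ℤ → AddCircle (1 : ℝ) | ∀ k : ℤ, (y (2 * k - 1), y (2 * k)) ∈ torB} ∧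
    ({y : ℤ → AddCircle (1 : ℝ) | ∀ k : ℤ, (y (2 * k), y (2 * k + 1)) ∈ torB} ∩
      {y : ℤ → AddCircle (1 : ℝ) | ∀ k : ℤ, (y (2 * k - 1), y (2 * k)) ∈ torB}).Nonempty := by
  have hx : (fun i : ℤ => ((i / 10 : ℝ) : AddCircle (1 : ℝ))) ∈
      {y : ℤ → AddCircle (1 : ℝ) | ∀ k : ℤ, (y (2 * k), y (2 * k + 1)) ∈ torB} ∩
        {y : ℤ → AddCircle (1 : ℝ) | ∀ k : ℤ, (y (2 * k - 1), y (2 * k)) ∈ torB} :=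
    mem_inter_of_forall_succ fun k => by simpa using torB_mem_orbit k
  exact ⟨isClosed_setOf_snd_eq_fst_add _, isPathConnected_setOf_snd_eq_fst_add _,
    diag_notMem_setOf_snd_eq_fst_add coe_one_div_ten_ne_zero, torB_mem_orbit, hx, _, hx⟩
end
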